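/- Define, for a positive integer n, the density ℓ⁽ⁿ⁾ on [0,1] by ℓ⁽ⁿ⁾(x) = 3/2 on [0, 1/(2n)), 1/2 on [1/(2n), 1/n), and 1 on [1/n, 1]. Then for any interval I ⊆ [0,1] with ∫_I ℓ⁽ⁿ⁾ ≥ 1/n, the Lebesgue measure of I is at least 1/n. -/

import Mathlib

open MeasureTheory Set intervalIntegral

/-- The density `ℓ⁽ⁿ⁾`: `3/2` on `[0, 1/(2n))`, `1/2` on `[1/(2n), 1/n)`, `1` on `[1/n, 1]`. -/
noncomputable def ell (n : ℕ) : ℝ → ℝ := fun x =>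
  if x < 1 / (2 * n) then 3/2 else if x < 1 / n then 1/2 else 1

/-! The density has the explicit piecewise-linear primitive `ellPrimitive n`, so
`∫ x in a..b, ell n x = ellPrimitive n b - ellPrimitive n a`. Writing `c = 1/(2n)`, so that
`1/n = 2c`, the claim becomes a linear inequality in each of the nine cases for the positions of
`a` and `b` relative to `c` and `2c`. -/

noncomputable def ellPrimitive (n : ℕ) (x : ℝ) : ℝ :=
  if x < 1 / (2 * n) then 3/2 * x else if x < 1 / n then x/2 + 1 / (2 * n) else x

lemma one_div_eq_two_mul_one_div_two_mul (x : ℝ) : 1 / x = 2 * (1 / (2 * x)) := by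
  rw [mul_one_div, div_mul_cancel_left₀ two_ne_zero, one_div]

lemma measurable_ell (n : ℕ) : Measurable (ell n) :=
  Measurable.ite measurableSet_Iio measurable_const
    (Measurable.ite measurableSet_Iio measurable_const measurable_const)

lemma intervalIntegrable_ell (n : ℕ) (a b : ℝ) : IntervalIntegrable (ell n) volume a b := by
  refine (intervalIntegrable_const (c := (3/2 : ℝ))).mono_fun
    (measurable_ell n).aestronglyMeasurable.restrict (Filter.Eventually.of_forall fun x => ?_)
  simp only [ell, Real.norm_eq_abs]
  split_ifs <;> norm_num

lemma continuous_ellPrimitive (n : ℕ) : Continuous (ellPrimitive n) := by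
  have hc : (0 : ℝ) ≤ 1 / (2 * n) := by positivity
  have hd := one_div_eq_two_mul_one_div_two_mul (n : ℝ)
  refine Continuous.if (fun x hx => ?_) (by fun_prop) (Continuous.if (fun x hx => ?_)
    (by fun_prop) (by fun_prop))
  · obtain rfl : x = 1 / (2 * n) := frontier_lt_subset_eq continuous_id continuous_const hx
    split_ifs <;> linarith
  · obtain rfl : x = 1 / n := frontier_lt_subset_eq continuous_id continuous_const hx
    linarith

lemma hasDerivAt_ellPrimitive {n : ℕ} {x : ℝ} (hc : x ≠ 1 / (2 * n)) (hd : x ≠ 1 / n) :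
    HasDerivAt (ellPrimitive n) (ell n x) x := by
  have hcd : (1 : ℝ) / (2 * n) ≤ 1 / n := by
    rw [one_div_eq_two_mul_one_div_two_mul (n : ℝ)]
    linarith [show (0 : ℝ) ≤ 1 / (2 * n) by positivity]
  rcases hc.lt_or_gt with hxc | hxc
  · rw [show ell n x = 3/2 from if_pos hxc]
    refine (((hasDerivAt_id x).const_mul (3/2 : ℝ)).congr_deriv (mul_one _)).congr_of_eventuallyEq
      ?_
    filter_upwards [Iio_mem_nhds hxc] with y hy
    simp only [ellPrimitive, mem_Iio.mp hy, ↓reduceIte, id]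
  rcases hd.lt_or_gt with hxd | hxd
  · rw [show ell n x = 1/2 by simp only [ell, hxc.not_gt, hxd, ↓reduceIte]]
    refine (((hasDerivAt_id x).div_const 2).add_const (1 / (2 * n : ℝ))).congr_of_eventuallyEq
      ?_
    filter_upwards [Ioo_mem_nhds hxc hxd] with y hy
    simp only [ellPrimitive, hy.1.not_gt, hy.2, ↓reduceIte, id]
  · rw [show ell n x = 1 by simp only [ell, (hcd.trans_lt hxd).not_gt, hxd.not_gt, ↓reduceIte]]
    refine (hasDerivAt_id x).congr_of_eventuallyEq ?_
    filter_upwards [Ioi_mem_nhds hxd] with y hy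
    simp only [ellPrimitive, (hcd.trans_lt hy).not_gt, (mem_Ioi.mp hy).not_gt, ↓reduceIte,
      id]

lemma integral_ell (n : ℕ) (a b : ℝ) :
    ∫ x in a..b, ell n x = ellPrimitive n b - ellPrimitive n a :=
  integral_eq_of_hasDerivAt_off_countable _ _ ((countable_singleton _).insert _)
    (continuous_ellPrimitive n).continuousOn
    (fun _ hx => hasDerivAt_ellPrimitive (fun h => hx.2 (.inl h)) (fun h => hx.2 (.inr h)))
    (intervalIntegrable_ell n a b)

lemma ellPrimitive_sub_lt_of_sub_lt {n : ℕ} {a b : ℝ} (ha : 0 ≤ a) (hab : b - a < 1 / n) :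
    ellPrimitive n b - ellPrimitive n a < 1 / n := by
  have hc : (0 : ℝ) ≤ 1 / (2 * n) := by positivity
  have hd := one_div_eq_two_mul_one_div_two_mul (n : ℝ)
  unfold ellPrimitive
  split_ifs <;> linarith

theorem ell_proportional_implies_length (n : ℕ) (a b : ℝ)
    (ha : 0 ≤ a)
    (hval : (∫ x in a..b, ell n x) ≥ 1 / n) :
    b - a ≥ 1 / n := by
  rw [integral_ell] at hval
  by_contra! h
  exact (ellPrimitive_sub_lt_of_sub_lt ha h).not_ge hval
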